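/- Let A be the 6×6 integer matrix with rows (0,3,3,1,0,1), (3,0,0,2,3,0), (3,0,0,2,1,2), (1,2,2,0,1,2), (0,3,1,1,0,3), (1,0,2,2,3,0), and let M = A − I. Then ker(M : ℤ⁶ → ℤ⁶) = 0, the cokernel ℤ⁶/Mℤ⁶ is isomorphic to ℤ/7ℤ, and under this isomorphism the class of the all-ones vector (1,1,1,1,1,1) is a generator of ℤ/7ℤ. -/
import Mathlib

open Matrix

private def Amat : Matrix (Fin 6) (Fin 6) ℤ :=
  !![0, 3, 3, 1, 0, 1; 3, 0, 0, 2, 3, 0; 3, 0, 0, 2, 1, 2;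
     1, 2, 2, 0, 1, 2; 0, 3, 1, 1, 0, 3; 1, 0, 2, 2, 3, 0]

private def Pmat : Matrix (Fin 6) (Fin 6) ℤ :=
  !![ 2,  2,  0,  0, -1, -2;
      2,  8, -5, -1,  2, -5;
      0, -5,  4,  1, -2,  3;
      0, -1,  1,  0,  0,  1;
     -1,  2, -2,  0,  2,  0;
     -2, -5,  3,  1,  0,  4]

private def Jmat : Matrix (Fin 6) (Fin 6) ℤ := Matrix.of fun _ _ => 1

private def fsum : (Fin 6 → ℤ) →ₗ[ℤ] ZMod 7 where
  toFun v := ∑ i, ((v i : ℤ) : ZMod 7)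
  map_add' x y := by simp [Finset.sum_add_distrib]
  map_smul' c x := by simp [Finset.mul_sum]

private lemma dPM : Pmat * (Amat - 1) = 1 + Jmat := by decide
private lemma dMP : (Amat - 1) * Pmat = 1 + Jmat := by decide
private lemma dcol : ∀ j, (∑ i, (Amat - 1) i j) = 7 := by decide
private lemma dones : (Amat - 1).mulVec (fun _ => (1:ℤ)) = fun _ => 7 := by decide

private lemma d7 : (7 : ℕ) • (6 : ZMod 7) = 0 := by decide
private lemma d6 : (6 : ZMod 7) ≠ 0 := by decide
private lemma d70 : (((7:ℤ)) : ZMod 7) = 0 := by decide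

private lemma hJv (v : Fin 6 → ℤ) : Jmat.mulVec v = fun _ => ∑ i, v i := by
  funext i; simp [Jmat, Matrix.mulVec, dotProduct]

/-- For the explicit 8-regular adjacency matrix `A` on 6 vertices and `M = A − I`:
`M` is injective on `ℤ⁶`, its cokernel is `ℤ/7ℤ`, and the class of the all-ones
vector is a generator (has order 7). Hence `C*(E) ≅ 𝒪₈`. -/
theorem example_regular_graph_O8
    (A : Matrix (Fin 6) (Fin 6) ℤ)
    (hA : A = !![0, 3, 3, 1, 0, 1;
                 3, 0, 0, 2, 3, 0;
                 3, 0, 0, 2, 1, 2;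
                 1, 2, 2, 0, 1, 2;
                 0, 3, 1, 1, 0, 3;
                 1, 0, 2, 2, 3, 0])
    (M : Matrix (Fin 6) (Fin 6) ℤ) (hM : M = A - 1) :
    Function.Injective M.mulVecLin ∧
      ∃ e : ((Fin 6 → ℤ) ⧸ LinearMap.range M.mulVecLin) ≃+ ZMod 7,
        addOrderOf (e (Submodule.Quotient.mk (fun _ => 1))) = 7 := by
  have hMA : M = Amat - 1 := by rw [hM, hA]; rfl
  clear hM hA
  subst hMA
  -- injectivity
  have hinj : Function.Injective (Amat - 1).mulVecLin := by
    rw [← LinearMap.ker_eq_bot, LinearMap.ker_eq_bot']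
    intro x hx
    have hx' : (Amat - 1).mulVec x = 0 := hx
    have h1 : (Pmat * (Amat - 1)).mulVec x = 0 := by
      rw [← Matrix.mulVec_mulVec, hx', Matrix.mulVec_zero]
    rw [dPM, Matrix.add_mulVec, Matrix.one_mulVec, hJv] at h1
    have hs : ∀ i, x i + (∑ j, x j) = 0 := fun i => congrFun h1 i
    have hsum : (∑ j, x j) = 0 := by
      have h2 : ∑ i, (x i + (∑ j, x j)) = 0 := by simp [hs]
      rw [Finset.sum_add_distrib] at h2
      simp only [Finset.sum_const, Finset.card_univ, Fintype.card_fin, nsmul_eq_mul] at h2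
      push_cast at h2
      linarith
    funext i
    have := hs i
    rw [hsum] at this
    simpa using this
  refine ⟨hinj, ?_⟩
  -- range M = ker fsum
  have hrange : LinearMap.range (Amat - 1).mulVecLin = LinearMap.ker fsum := by
    apply le_antisymm
    · rintro v ⟨w, rfl⟩
      simp only [LinearMap.mem_ker, fsum, LinearMap.coe_mk, AddHom.coe_mk,
        Matrix.mulVecLin_apply]
      have : ∀ i, (Amat - 1).mulVec w i = ∑ j, (Amat - 1) i j * w j := by
        intro i; rfl
      calc ∑ i, (((Amat - 1).mulVec w i : ℤ) : ZMod 7)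
          = ∑ i, ∑ j, (((Amat - 1) i j : ℤ) : ZMod 7) * ((w j : ℤ) : ZMod 7) := by
            refine Finset.sum_congr rfl fun i _ => ?_
            rw [this i]; push_cast; rfl
        _ = ∑ j, (∑ i, (((Amat - 1) i j : ℤ) : ZMod 7)) * ((w j : ℤ) : ZMod 7) := by
            rw [Finset.sum_comm]
            exact Finset.sum_congr rfl fun j _ => (Finset.sum_mul ..).symm
        _ = 0 := by
            refine Finset.sum_eq_zero fun j _ => ?_
            rw [← Int.cast_sum, dcol j]
            rw [d70, zero_mul]
    · intro v hv
      simp only [LinearMap.mem_ker, fsum, LinearMap.coe_mk, AddHom.coe_mk] at hv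
      rw [← Int.cast_sum] at hv
      have hdvd : (7 : ℤ) ∣ ∑ i, v i :=
        (ZMod.intCast_zmod_eq_zero_iff_dvd _ 7).mp hv
      obtain ⟨k, hk⟩ := hdvd
      refine ⟨Pmat.mulVec v - k • (fun _ => 1), ?_⟩
      have step : (Amat - 1).mulVecLin (Pmat.mulVec v - k • (fun _ => 1)) =
          (Amat - 1).mulVec (Pmat.mulVec v) - k • (Amat - 1).mulVec (fun _ => 1) := by
        rw [map_sub, _root_.map_smul]; rfl
      rw [step, Matrix.mulVec_mulVec, dMP, Matrix.add_mulVec, Matrix.one_mulVec, hJv, dones]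
      funext i
      simp only [Pi.sub_apply, Pi.add_apply, Pi.smul_apply, smul_eq_mul, hk]
      ring
  have hle : LinearMap.range (Amat - 1).mulVecLin ≤ LinearMap.ker fsum := le_of_eq hrange
  set q : ((Fin 6 → ℤ) ⧸ LinearMap.range (Amat - 1).mulVecLin) →ₗ[ℤ] ZMod 7 :=
    Submodule.liftQ _ fsum hle with hq
  have hqinj : Function.Injective q := by
    rw [← LinearMap.ker_eq_bot]
    exact Submodule.ker_liftQ_eq_bot _ _ _ (le_of_eq hrange.symm)
  have hqsurj : Function.Surjective q := by
    intro c
    refine ⟨Submodule.Quotient.mk (fun i => if i = 0 then (c.val : ℤ) else 0), ?_⟩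
    rw [hq, Submodule.liftQ_apply]
    simp [fsum, Fin.sum_univ_six, ZMod.natCast_val, ZMod.cast_id]
  set e : ((Fin 6 → ℤ) ⧸ LinearMap.range (Amat - 1).mulVecLin) ≃ₗ[ℤ] ZMod 7 :=
    LinearEquiv.ofBijective q ⟨hqinj, hqsurj⟩ with he
  refine ⟨e.toAddEquiv, ?_⟩
  have hval : e.toAddEquiv (Submodule.Quotient.mk (fun _ => 1)) = (6 : ZMod 7) := by
    show q (Submodule.Quotient.mk (fun _ => 1)) = 6
    rw [hq, Submodule.liftQ_apply]
    simp [fsum, Fin.sum_univ_six]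
    decide
  rw [hval]
  haveI : Fact (Nat.Prime 7) := ⟨by norm_num⟩
  exact addOrderOf_eq_prime d7 d6
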